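/- arXiv:1307.4724 — 2 statements merged into one kernel-verified Lean document; each statement's English description precedes it below -/
import Mathlib

section
/- Let G and H be finite connected nontrivial simple graphs. Then the strong resolving graph (G ⊠ H)_SR of the strong product is a subgraph of the Cartesian sum G_SR ⊕ H_SR of the strong resolving graphs; that is, they have the same vertex set V(G) × V(H), and every pair of vertices adjacent in (G ⊠ H)_SR is adjacent in G_SR ⊕ H_SR. -/
open SimpleGraph Finset

variable {α β : Type*}

/-- The strong product of two simple graphs: distinct vertices `(a,b)` and `(c,d)` are adjacent
iff (`a = c` or `a ~ c`) and (`b = d` or `b ~ d`). -/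
def strongProd (G : SimpleGraph α) (H : SimpleGraph β) : SimpleGraph (α × β) where
  Adj x y := x ≠ y ∧ (x.1 = y.1 ∨ G.Adj x.1 y.1) ∧ (x.2 = y.2 ∨ H.Adj x.2 y.2)
  symm := by
    constructor
    rintro x y ⟨h1, h2, h3⟩
    exact ⟨h1.symm, h2.imp Eq.symm (fun a => a.symm), h3.imp Eq.symm (fun a => a.symm)⟩
  loopless := ⟨fun x h => h.1 rfl⟩

/-- The Cartesian sum (disjunctive product) of two simple graphs. -/
def cartSum (G : SimpleGraph α) (H : SimpleGraph β) : SimpleGraph (α × β) where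
  Adj x y := x ≠ y ∧ (G.Adj x.1 y.1 ∨ H.Adj x.2 y.2)
  symm := by
    constructor
    rintro x y ⟨h1, h2⟩
    exact ⟨h1.symm, h2.imp (fun a => a.symm) (fun a => a.symm)⟩
  loopless := ⟨fun x h => h.1 rfl⟩

/-- `u` is maximally distant from `v` in `G`. -/
def MaximallyDistantFrom (G : SimpleGraph α) (u v : α) : Prop :=
  ∀ w, G.Adj u w → G.dist v w ≤ G.dist u v

/-- `u` and `v` are mutually maximally distant in `G`. -/
def MutuallyMaximallyDistant (G : SimpleGraph α) (u v : α) : Prop :=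
  MaximallyDistantFrom G u v ∧ MaximallyDistantFrom G v u

/-- The strong resolving graph of `G`. -/
def strongResolvingGraph (G : SimpleGraph α) : SimpleGraph α where
  Adj u v := u ≠ v ∧ MutuallyMaximallyDistant G u v
  symm := by constructor; rintro u v ⟨h1, h2, h3⟩; exact ⟨h1.symm, h3, h2⟩
  loopless := ⟨fun x h => h.1 rfl⟩

/-- A finset of vertices is independent if no two of its (distinct) members are adjacent. -/
def IsIndepFinset (G : SimpleGraph α) (s : Finset α) : Prop :=
  ∀ u ∈ s, ∀ v ∈ s, u ≠ v → ¬ G.Adj u v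

/-- The independence number `β(G)`. -/
noncomputable def indepNum (G : SimpleGraph α) [Fintype α] : ℕ :=
  sSup {n | ∃ s : Finset α, IsIndepFinset G s ∧ s.card = n}

/-- `w` strongly resolves `u` and `v` in `G`. -/
def StronglyResolves (G : SimpleGraph α) (w u v : α) : Prop :=
  G.dist w u = G.dist w v + G.dist v u ∨ G.dist w v = G.dist w u + G.dist u v

/-- A strong metric generator for `G`. -/
def IsStrongMetricGenerator (G : SimpleGraph α) (s : Finset α) : Prop :=
  ∀ u v : α, u ≠ v → ∃ w ∈ s, StronglyResolves G w u v

/-- The strong metric dimension of `G`. -/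
noncomputable def sdim (G : SimpleGraph α) [Fintype α] : ℕ :=
  sInf {n | ∃ s : Finset α, IsStrongMetricGenerator G s ∧ s.card = n}

/-!
In a strong product of connected graphs the distance is the maximum of the coordinate distances.
If `(a, b)` and `(c, d)` are mutually maximally distant and, say, `d_H(b, d) ≤ d_G(a, c)`, then
for a neighbour `w` of `a` the vertex `(w, b)` is a neighbour of `(a, b)`, so
`d_G(c, w) ≤ max (d_G(c, w)) (d_H(d, b)) ≤ max (d_G(a, c)) (d_H(b, d)) = d_G(a, c)`;
hence `a` and `c` are mutually maximally distant in `G`.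
-/

lemma SimpleGraph.Walk.dist_le_length_of_adj_imp {V W : Type*} {K : SimpleGraph V}
    {G : SimpleGraph W} (hG : G.Connected) (f : V → W)
    (hf : ∀ ⦃u v⦄, K.Adj u v → f u = f v ∨ G.Adj (f u) (f v)) {u v : V} (p : K.Walk u v) :
    G.dist (f u) (f v) ≤ p.length := by
  induction p with
  | nil => simp
  | @cons u v w h p ih =>
    have hstep : G.dist (f u) (f v) ≤ 1 := by
      rcases hf h with heq | hadj
      · simp [heq]
      · exact (dist_eq_one_iff_adj.2 hadj).le
    calc G.dist (f u) (f w) ≤ G.dist (f u) (f v) + G.dist (f v) (f w) := hG.dist_triangle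
      _ ≤ 1 + p.length := add_le_add hstep ih
      _ = (p.cons h).length := by rw [Walk.length_cons, add_comm]

section StrongProd

variable {G : SimpleGraph α} {H : SimpleGraph β}

lemma strongProd_adj_left {a₁ a₂ : α} {b : β} :
    (strongProd G H).Adj (a₁, b) (a₂, b) ↔ G.Adj a₁ a₂ := by
  simp only [strongProd, ne_eq, Prod.mk.injEq, and_true, true_or]
  exact ⟨fun h => h.2.resolve_left h.1, fun h => ⟨h.ne, Or.inr h⟩⟩

lemma strongProd_adj_right {a : α} {b₁ b₂ : β} :
    (strongProd G H).Adj (a, b₁) (a, b₂) ↔ H.Adj b₁ b₂ := by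
  simp only [strongProd, ne_eq, Prod.mk.injEq, true_and, true_or]
  exact ⟨fun h => h.2.resolve_left h.1, fun h => ⟨h.ne, Or.inr h⟩⟩

lemma strongProd_adj_of_adj_of_adj {a₁ a₂ : α} {b₁ b₂ : β} (ha : G.Adj a₁ a₂)
    (hb : H.Adj b₁ b₂) : (strongProd G H).Adj (a₁, b₁) (a₂, b₂) :=
  ⟨fun h => ha.ne (congrArg Prod.fst h), Or.inr ha, Or.inr hb⟩

/-- Walk along `p` and `q` simultaneously, waiting at the end of the shorter one. -/
def SimpleGraph.Walk.strongProd : {a₁ a₂ : α} → {b₁ b₂ : β} → G.Walk a₁ a₂ → H.Walk b₁ b₂ →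
    (strongProd G H).Walk (a₁, b₁) (a₂, b₂)
  | _, _, _, _, .nil, .nil => .nil
  | _, _, _, _, .nil, .cons h q => .cons (strongProd_adj_right.2 h) (Walk.strongProd .nil q)
  | _, _, _, _, .cons h p, .nil => .cons (strongProd_adj_left.2 h) (Walk.strongProd p .nil)
  | _, _, _, _, .cons h p, .cons h' q =>
      .cons (strongProd_adj_of_adj_of_adj h h') (Walk.strongProd p q)

lemma SimpleGraph.Walk.length_strongProd : ∀ {a₁ a₂ : α} {b₁ b₂ : β}
    (p : G.Walk a₁ a₂) (q : H.Walk b₁ b₂), (p.strongProd q).length = max p.length q.length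
  | _, _, _, _, .nil, .nil => by simp [Walk.strongProd]
  | _, _, _, _, .nil, .cons _ q => by
      simp [Walk.strongProd, length_strongProd Walk.nil q]
  | _, _, _, _, .cons _ p, .nil => by
      simp [Walk.strongProd, length_strongProd p Walk.nil]
  | _, _, _, _, .cons _ p, .cons _ q => by
      simp [Walk.strongProd, length_strongProd p q]

lemma dist_strongProd (hG : G.Connected) (hH : H.Connected) (x y : α × β) :
    (strongProd G H).dist x y = max (G.dist x.1 y.1) (H.dist x.2 y.2) := by
  obtain ⟨p, hp⟩ := hG.exists_walk_length_eq_dist x.1 y.1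
  obtain ⟨q, hq⟩ := hH.exists_walk_length_eq_dist x.2 y.2
  apply le_antisymm
  · calc (strongProd G H).dist x y ≤ (p.strongProd q).length := dist_le _
      _ = _ := by rw [Walk.length_strongProd, hp, hq]
  · obtain ⟨r, hr⟩ := Reachable.exists_walk_length_eq_dist ⟨p.strongProd q⟩
    rw [← hr]
    have hfst : G.dist x.1 y.1 ≤ r.length :=
      r.dist_le_length_of_adj_imp hG Prod.fst fun _ _ (h : (strongProd G H).Adj _ _) => h.2.1
    have hsnd : H.dist x.2 y.2 ≤ r.length :=
      r.dist_le_length_of_adj_imp hH Prod.snd fun _ _ (h : (strongProd G H).Adj _ _) => h.2.2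
    exact max_le hfst hsnd

lemma MaximallyDistantFrom.fst_of_strongProd (hG : G.Connected) (hH : H.Connected)
    {x y : α × β} (h : MaximallyDistantFrom (strongProd G H) x y)
    (hle : H.dist x.2 y.2 ≤ G.dist x.1 y.1) : MaximallyDistantFrom G x.1 y.1 := by
  intro w hw
  have hwx := h (w, x.2) (strongProd_adj_left.2 hw)
  rw [dist_strongProd hG hH, dist_strongProd hG hH, max_eq_left hle] at hwx
  exact (le_max_left _ _).trans hwx

lemma MaximallyDistantFrom.snd_of_strongProd (hG : G.Connected) (hH : H.Connected)
    {x y : α × β} (h : MaximallyDistantFrom (strongProd G H) x y)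
    (hle : G.dist x.1 y.1 ≤ H.dist x.2 y.2) : MaximallyDistantFrom H x.2 y.2 := by
  intro w hw
  have hwx := h (x.1, w) (strongProd_adj_right.2 hw)
  rw [dist_strongProd hG hH, dist_strongProd hG hH, max_eq_right hle] at hwx
  exact (le_max_right _ _).trans hwx

lemma strongResolvingGraph_adj_fst_of_strongProd (hG : G.Connected) (hH : H.Connected)
    {x y : α × β} (h : (strongResolvingGraph (strongProd G H)).Adj x y)
    (hle : H.dist x.2 y.2 ≤ G.dist x.1 y.1) : (strongResolvingGraph G).Adj x.1 y.1 := by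
  obtain ⟨hne, hxy, hyx⟩ := h
  refine ⟨fun h₁ => hne (Prod.ext h₁ ?_), hxy.fst_of_strongProd hG hH hle,
    hyx.fst_of_strongProd hG hH (by rwa [dist_comm, G.dist_comm])⟩
  rwa [h₁, dist_self, Nat.le_zero, hH.dist_eq_zero_iff] at hle

lemma strongResolvingGraph_adj_snd_of_strongProd (hG : G.Connected) (hH : H.Connected)
    {x y : α × β} (h : (strongResolvingGraph (strongProd G H)).Adj x y)
    (hle : G.dist x.1 y.1 ≤ H.dist x.2 y.2) : (strongResolvingGraph H).Adj x.2 y.2 := by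
  obtain ⟨hne, hxy, hyx⟩ := h
  refine ⟨fun h₂ => hne (Prod.ext ?_ h₂), hxy.snd_of_strongProd hG hH hle,
    hyx.snd_of_strongProd hG hH (by rwa [dist_comm, H.dist_comm])⟩
  rwa [h₂, dist_self, Nat.le_zero, hG.dist_eq_zero_iff] at hle

end StrongProd

theorem SR_strongProd_le_cartSum_SR_general
    (G : SimpleGraph α) (H : SimpleGraph β)
    (hG : G.Connected) (hH : H.Connected) :
    strongResolvingGraph (strongProd G H) ≤
      cartSum (strongResolvingGraph G) (strongResolvingGraph H) := by
  intro x y h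
  refine ⟨h.ne, ?_⟩
  rcases le_total (H.dist x.2 y.2) (G.dist x.1 y.1) with hle | hle
  · exact Or.inl (strongResolvingGraph_adj_fst_of_strongProd hG hH h hle)
  · exact Or.inr (strongResolvingGraph_adj_snd_of_strongProd hG hH h hle)

theorem SR_strongProd_le_cartSum_SR [Fintype α] [Fintype β]
    (G : SimpleGraph α) (H : SimpleGraph β)
    (hG : G.Connected) (hGn : Nontrivial α) (hH : H.Connected) (hHn : Nontrivial β) :
    strongResolvingGraph (strongProd G H) ≤
      cartSum (strongResolvingGraph G) (strongResolvingGraph H) :=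
  SR_strongProd_le_cartSum_SR_general G H hG hH
end

section
/- For every integer t ≥ 1, the strong metric dimension of the strong product of the triangle C₃ with the odd cycle C_{2t+1} satisfies dim_s(C₃ ⊠ C_{2t+1}) = 5t + 3. -/
open SimpleGraph Finset

variable {α β : Type*}

/-!
Distances in `K_k ⊠ C_{2t+1}` are maxima of the distances in the factors, and distances in the
cycle are circular distances `min (i - j) (j - i)` of residues. A vertex strongly resolving two
mutually maximally distant vertices must be one of them, so the complement of a strong metric
generator is independent in the strong resolving graph. Two vertices of one column are true twins,
and two vertices in columns half a turn apart (`b` and `b + t`) are diametral; both pairs are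
mutually maximally distant, so an independent set meets each column at most once and its set of
columns `C` is disjoint from `C + t`, whence it has at most `t` elements. Conversely, the vertices
`(a, i)` with `i < t` can all be left out: `(a, i)` and `(a, j)` with `i < j` lie on a geodesic
from `(a, i + t)`. Hence `dim_s(K_k ⊠ C_{2t+1}) = k (2t + 1) - t`.
-/

namespace Fin

def circularNorm {n : ℕ} (z : Fin n) : ℕ := min z.val (-z).val

theorem circularNorm_zero {n : ℕ} [NeZero n] : circularNorm (0 : Fin n) = 0 := by
  simp [circularNorm]

theorem circularNorm_neg {n : ℕ} (z : Fin n) : circularNorm (-z) = circularNorm z := by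
  rw [circularNorm, circularNorm, neg_neg, min_comm]

theorem circularNorm_le_val {n : ℕ} (z : Fin n) : circularNorm z ≤ z.val := min_le_left _ _

theorem circularNorm_add_one_le {n : ℕ} (z : Fin (n + 1)) :
    circularNorm (z + 1) ≤ circularNorm z + 1 := by
  rcases eq_or_ne z (last n) with rfl | hz
  · simp [circularNorm]
  have hlt : z.val < n := val_lt_last hz
  have hval : (z + 1).val = z.val + 1 := val_add_one_of_lt' (by omega)
  have hne : z + 1 ≠ 0 := fun h => by simpa [hval] using congrArg Fin.val h
  rw [circularNorm, circularNorm, val_neg, val_neg, if_neg hne, hval]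
  split_ifs with h0
  · simp [h0]
  · omega

theorem circularNorm_le {t : ℕ} (z : Fin (2 * t + 1)) : circularNorm z ≤ t := by
  rw [circularNorm, val_neg]
  split_ifs <;> omega

theorem circularNorm_half (t : ℕ) : circularNorm (⟨t, by omega⟩ : Fin (2 * t + 1)) = t := by
  rw [circularNorm, val_neg]
  simp only [Fin.ext_iff, val_zero]
  split_ifs <;> omega

end Fin

namespace SimpleGraph

variable {G : SimpleGraph α} {G' : SimpleGraph β} {u v : α}

theorem dist_le_one_of_eq_or_adj (h : u = v ∨ G.Adj u v) : G.dist u v ≤ 1 := by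
  rcases h with rfl | h
  · simp
  · exact (dist_eq_one_iff_adj.mpr h).le

theorem Walk.le_add_length_of_forall_adj {f : α → ℕ}
    (hf : ∀ x y, G.Adj x y → f x ≤ f y + 1) (p : G.Walk u v) : f u ≤ f v + p.length := by
  induction p with
  | nil => simp
  | cons h _ ih =>
    have := hf _ _ h
    rw [Walk.length_cons]
    omega

theorem Reachable.le_add_dist_of_forall_adj {f : α → ℕ}
    (hf : ∀ x y, G.Adj x y → f x ≤ f y + 1) (h : G.Reachable u v) :
    f u ≤ f v + G.dist u v := by
  obtain ⟨p, hp⟩ := h.exists_walk_length_eq_dist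
  exact hp ▸ p.le_add_length_of_forall_adj hf

theorem Walk.dist_apply_le_length {f : α → β}
    (hf : ∀ x y, G.Adj x y → f x = f y ∨ G'.Adj (f x) (f y)) (p : G.Walk u v) :
    G'.dist (f u) (f v) ≤ p.length := by
  induction p with
  | nil => simp
  | @cons a b c h _ ih =>
    have hstep := hf a b h
    have hreach : G'.Reachable (f a) (f b) := by
      rcases hstep with heq | hadj
      · exact heq ▸ Reachable.refl _
      · exact hadj.reachable
    have := hreach.dist_triangle_left (f c)
    have := dist_le_one_of_eq_or_adj hstep
    rw [Walk.length_cons]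
    omega

theorem Reachable.dist_apply_le {f : α → β}
    (hf : ∀ x y, G.Adj x y → f x = f y ∨ G'.Adj (f x) (f y)) (h : G.Reachable u v) :
    G'.dist (f u) (f v) ≤ G.dist u v := by
  obtain ⟨p, hp⟩ := h.exists_walk_length_eq_dist
  exact hp ▸ p.dist_apply_le_length hf

theorem Reachable.exists_adj_dist_eq_add_one (h : G.Reachable u v) (hne : u ≠ v) :
    ∃ w, G.Adj u w ∧ G.dist u v = G.dist w v + 1 := by
  obtain ⟨p, hp⟩ := h.exists_walk_length_eq_dist
  cases p with
  | nil => exact absurd rfl hne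
  | cons hadj q =>
    refine ⟨_, hadj, le_antisymm ?_ ?_⟩
    · have := hadj.reachable.dist_triangle_left v
      rw [dist_eq_one_iff_adj.mpr hadj] at this
      omega
    · have := dist_le q
      rw [Walk.length_cons] at hp
      omega

theorem Connected.exists_eq_or_adj_dist_eq_sub_one (hG : G.Connected) (u v : α) :
    ∃ w, (u = w ∨ G.Adj u w) ∧ G.dist w v = G.dist u v - 1 := by
  by_cases huv : u = v
  · exact ⟨u, Or.inl rfl, by simp [huv]⟩
  · obtain ⟨w, hadj, hw⟩ := (hG u v).exists_adj_dist_eq_add_one huv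
    exact ⟨w, Or.inr hadj, by omega⟩

theorem cycleGraph_dist_le_val_sub {n : ℕ} (a b : Fin (n + 2)) :
    (cycleGraph (n + 2)).dist a b ≤ (b - a).val := by
  generalize hk : (b - a).val = k
  induction k generalizing b with
  | zero => simp [sub_eq_zero.mp (Fin.ext hk)]
  | succ k ih =>
    have hne : b - a ≠ 0 := fun h => by simp [h] at hk
    have hprev : (b - 1 - a).val = k := by
      rw [sub_right_comm, Fin.val_sub_one_of_ne_zero hne, hk, Nat.add_sub_cancel]
    have hadj : (cycleGraph (n + 2)).Adj (b - 1) b :=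
      cycleGraph_adj.mpr (Or.inr (sub_sub_cancel b 1))
    have := hadj.reachable.dist_triangle_right a
    rw [dist_eq_one_iff_adj.mpr hadj] at this
    have := ih (b - 1) hprev
    omega

theorem cycleGraph_dist (n : ℕ) (i j : Fin n) :
    (cycleGraph n).dist i j = Fin.circularNorm (i - j) := by
  match n with
  | 0 => exact i.elim0
  | 1 => simp [Subsingleton.elim i j, Fin.circularNorm]
  | n + 2 =>
    apply le_antisymm
    · rw [Fin.circularNorm, neg_sub, dist_comm]
      exact le_min (cycleGraph_dist_le_val_sub j i)
        (dist_comm (G := cycleGraph (n + 2)) ▸ cycleGraph_dist_le_val_sub i j)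
    · have lipschitz : ∀ x y : Fin (n + 2), (cycleGraph (n + 2)).Adj x y →
          Fin.circularNorm (x - j) ≤ Fin.circularNorm (y - j) + 1 := by
        intro x y hxy
        rcases cycleGraph_adj.mp hxy with h | h
        · have hx : x - j = (y - j) + 1 := by rw [← h]; abel
          rw [hx]
          exact Fin.circularNorm_add_one_le _
        · have hx : x - j = -(-(y - j) + 1) := by rw [← h]; abel
          rw [hx, Fin.circularNorm_neg, ← Fin.circularNorm_neg (y - j)]
          exact Fin.circularNorm_add_one_le _
      simpa [Fin.circularNorm_zero] using
        (cycleGraph_connected.preconnected i j).le_add_dist_of_forall_adj lipschitz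

theorem boxProd_le_strongProd (G : SimpleGraph α) (H : SimpleGraph β) :
    G.boxProd H ≤ strongProd G H := by
  rintro x y (⟨hG, h2⟩ | ⟨hH, h1⟩)
  · exact ⟨hG.ne ∘ congrArg Prod.fst, Or.inr hG, Or.inl h2⟩
  · exact ⟨hH.ne ∘ congrArg Prod.snd, Or.inl h1, Or.inr hH⟩

theorem Connected.strongProd {G : SimpleGraph α} {H : SimpleGraph β} (hG : G.Connected)
    (hH : H.Connected) : (strongProd G H).Connected :=
  (hG.boxProd hH).mono (boxProd_le_strongProd G H)

theorem strongProd_dist {G : SimpleGraph α} {H : SimpleGraph β} (hG : G.Connected)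
    (hH : H.Connected) (x y : α × β) :
    (strongProd G H).dist x y = max (G.dist x.1 y.1) (H.dist x.2 y.2) := by
  have hGH := hG.strongProd hH
  apply le_antisymm
  · suffices key : ∀ N x, G.dist x.1 y.1 ≤ N → H.dist x.2 y.2 ≤ N →
        (strongProd G H).dist x y ≤ N
      from key _ x (le_max_left _ _) (le_max_right _ _)
    intro N
    induction N with
    | zero =>
      intro x h1 h2
      have hx : x = y := Prod.ext (hG.dist_eq_zero_iff.mp (by omega))
        (hH.dist_eq_zero_iff.mp (by omega))
      simp [hx]
    | succ N ih =>
      intro x h1 h2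
      obtain ⟨a, ha, ha'⟩ := hG.exists_eq_or_adj_dist_eq_sub_one x.1 y.1
      obtain ⟨b, hb, hb'⟩ := hH.exists_eq_or_adj_dist_eq_sub_one x.2 y.2
      have hstep : x = (a, b) ∨ (strongProd G H).Adj x (a, b) := by
        by_cases hx : x = (a, b)
        · exact Or.inl hx
        · exact Or.inr ⟨hx, ha, hb⟩
      have := dist_le_one_of_eq_or_adj hstep
      have := hGH.dist_triangle (u := x) (v := (a, b)) (w := y)
      have := ih (a, b) (by simp only; omega) (by simp only; omega)
      omega
  · exact max_le ((hGH x y).dist_apply_le (fun _ _ h => h.2.1))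
      ((hGH x y).dist_apply_le (fun _ _ h => h.2.2))

theorem maximallyDistantFrom_of_adj {G : SimpleGraph α} {u v : α} (huv : G.Adj u v)
    (h : ∀ w, G.Adj u w → v = w ∨ G.Adj v w) : MaximallyDistantFrom G u v := fun w hw => by
  rw [dist_eq_one_iff_adj.mpr huv]
  exact dist_le_one_of_eq_or_adj (h w hw)

theorem mutuallyMaximallyDistant_of_forall_dist_le {G : SimpleGraph α} {u v : α}
    (h : ∀ x y, G.dist x y ≤ G.dist u v) : MutuallyMaximallyDistant G u v :=
  ⟨fun w _ => h v w, fun w _ => (h u w).trans_eq dist_comm⟩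

theorem MaximallyDistantFrom.eq_of_dist_eq_add {G : SimpleGraph α} {u v w : α}
    (hG : G.Connected) (hmax : MaximallyDistantFrom G v u)
    (h : G.dist w u = G.dist w v + G.dist v u) : w = v := by
  by_contra hne
  -- a neighbour `v'` of `v` one step closer to `w` would give a shorter route from `w` to `u`
  obtain ⟨v', hadj, hv'⟩ := (hG v w).exists_adj_dist_eq_add_one (Ne.symm hne)
  have := hmax v' hadj
  have := hG.dist_triangle (u := w) (v := v') (w := u)
  have : G.dist w v = G.dist v w := dist_comm
  have : G.dist w v' = G.dist v' w := dist_comm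
  have : G.dist v' u = G.dist u v' := dist_comm
  omega

theorem StronglyResolves.eq_or_eq {G : SimpleGraph α} {u v w : α} (hG : G.Connected)
    (huv : MutuallyMaximallyDistant G u v) (h : StronglyResolves G w u v) : w = u ∨ w = v :=
  h.elim (fun h => Or.inr (huv.2.eq_of_dist_eq_add hG h))
    (fun h => Or.inl (huv.1.eq_of_dist_eq_add hG h))

theorem StronglyResolves.symm {G : SimpleGraph α} {u v w : α} (h : StronglyResolves G w u v) :
    StronglyResolves G w v u :=
  Or.symm h

theorem IsStrongMetricGenerator.isIndepFinset_compl [Fintype α] [DecidableEq α]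
    {G : SimpleGraph α} {s : Finset α} (hG : G.Connected) (hs : IsStrongMetricGenerator G s) :
    IsIndepFinset (strongResolvingGraph G) sᶜ := by
  rintro u hu v hv huv ⟨-, hmmd⟩
  obtain ⟨w, hw, hres⟩ := hs u v huv
  rcases hres.eq_or_eq hG hmmd with rfl | rfl
  · exact mem_compl.mp hu hw
  · exact mem_compl.mp hv hw

theorem isStrongMetricGenerator_of_forall_notMem {G : SimpleGraph α} {s : Finset α}
    (h : ∀ u ∉ s, ∀ v ∉ s, u ≠ v → ∃ w ∈ s, StronglyResolves G w u v) :
    IsStrongMetricGenerator G s := by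
  intro u v huv
  by_cases hu : u ∈ s
  · exact ⟨u, hu, Or.inr (by simp)⟩
  by_cases hv : v ∈ s
  · exact ⟨v, hv, Or.inl (by simp)⟩
  exact h u hu v hv huv

theorem sdim_eq_card [Fintype α] {G : SimpleGraph α} {s : Finset α}
    (hs : IsStrongMetricGenerator G s)
    (hmin : ∀ s', IsStrongMetricGenerator G s' → s.card ≤ s'.card) : sdim G = s.card :=
  le_antisymm (Nat.sInf_le ⟨s, hs, rfl⟩)
    (le_csInf ⟨_, s, hs, rfl⟩ (by rintro _ ⟨s', hs', rfl⟩; exact hmin s' hs'))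

section CompleteStrongProdOddCycle

theorem strongProd_top_mutuallyMaximallyDistant_of_snd_eq {H : SimpleGraph β} {u v : α × β}
    (hne : u ≠ v) (h : u.2 = v.2) : MutuallyMaximallyDistant (strongProd ⊤ H) u v := by
  have twin : ∀ x y : α × β, x ≠ y → x.2 = y.2 →
      MaximallyDistantFrom (strongProd ⊤ H) x y := by
    intro x y hxy h2
    refine maximallyDistantFrom_of_adj ⟨hxy, em _, Or.inl h2⟩ fun w hw => ?_
    by_cases hyw : y = w
    · exact Or.inl hyw
    · exact Or.inr ⟨hyw, em _, h2 ▸ hw.2.2⟩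
  exact ⟨twin u v hne h, twin v u hne.symm h.symm⟩

variable [Nonempty α] {t : ℕ}

theorem connected_strongProd_top_cycleGraph {n : ℕ} :
    (strongProd (⊤ : SimpleGraph α) (cycleGraph (n + 1))).Connected :=
  connected_top.strongProd cycleGraph_connected

theorem strongProd_top_cycleGraph_dist {n : ℕ} (x y : α × Fin (n + 1)) :
    (strongProd ⊤ (cycleGraph (n + 1))).dist x y =
      max ((⊤ : SimpleGraph α).dist x.1 y.1) (Fin.circularNorm (x.2 - y.2)) := by
  rw [strongProd_dist connected_top cycleGraph_connected, cycleGraph_dist]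

theorem strongProd_top_oddCycle_mutuallyMaximallyDistant (ht : 1 ≤ t)
    {u v : α × Fin (2 * t + 1)} (h : Fin.circularNorm (u.2 - v.2) = t) :
    MutuallyMaximallyDistant (strongProd ⊤ (cycleGraph (2 * t + 1))) u v :=
  mutuallyMaximallyDistant_of_forall_dist_le fun x y => by
    rw [strongProd_top_cycleGraph_dist, strongProd_top_cycleGraph_dist, h]
    have := dist_le_one_of_eq_or_adj (G := ⊤) (em (x.1 = y.1))
    have := Fin.circularNorm_le (x.2 - y.2)
    omega

theorem strongProd_top_oddCycle_card_le_of_isIndepFinset (ht : 1 ≤ t)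
    {I : Finset (α × Fin (2 * t + 1))}
    (hI : IsIndepFinset (strongResolvingGraph (strongProd ⊤ (cycleGraph (2 * t + 1)))) I) :
    I.card ≤ t := by
  classical
  set T : Fin (2 * t + 1) := ⟨t, by omega⟩
  have hinj : Set.InjOn Prod.snd (I : Set (α × Fin (2 * t + 1))) := fun u hu v hv h => by
    by_contra hne
    exact hI u hu v hv hne ⟨hne, strongProd_top_mutuallyMaximallyDistant_of_snd_eq hne h⟩
  set C := I.image Prod.snd
  have hdisj : Disjoint C (C.image (· + T)) := by
    rw [disjoint_right]
    rintro _ hb' hb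
    obtain ⟨_, hbC, rfl⟩ := mem_image.mp hb'
    obtain ⟨u, hu, rfl⟩ := mem_image.mp hbC
    obtain ⟨v, hv, hvb⟩ := mem_image.mp hb
    have hsub : u.2 - v.2 = -T := by rw [hvb]; abel
    have hne : u ≠ v := fun huv => by simp [huv, T, Fin.ext_iff] at hsub; omega
    refine hI u hu v hv hne ⟨hne, strongProd_top_oddCycle_mutuallyMaximallyDistant ht ?_⟩
    rw [hsub, Fin.circularNorm_neg, Fin.circularNorm_half]
  have := card_union_of_disjoint hdisj ▸ card_le_univ (C ∪ C.image (· + T))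
  rw [card_image_of_injective _ (add_left_injective T), card_image_of_injOn hinj,
    Fintype.card_fin] at this
  omega

theorem strongProd_top_oddCycle_stronglyResolves (a : α) {i j : Fin (2 * t + 1)} (hij : i < j)
    (hj : j.val < t) :
    StronglyResolves (strongProd ⊤ (cycleGraph (2 * t + 1))) (a, i + ⟨t, by omega⟩) (a, i)
      (a, j) := by
  set T : Fin (2 * t + 1) := ⟨t, by omega⟩
  have hji : (j - i).val = j.val - i.val := Fin.coe_sub_iff_le.mpr hij.le
  have hwu : (strongProd ⊤ (cycleGraph (2 * t + 1))).dist (a, i + T) (a, i) = t := by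
    simp [strongProd_top_cycleGraph_dist, T, Fin.circularNorm_half]
  have hwv :
      (strongProd ⊤ (cycleGraph (2 * t + 1))).dist (a, i + T) (a, j) ≤ t - (j - i).val := by
    have hle : j - i ≤ T := by rw [Fin.le_def, hji]; simp only [T]; omega
    have : i + T - j = T - (j - i) := by abel
    simpa [strongProd_top_cycleGraph_dist, this, Fin.coe_sub_iff_le.mpr hle] using
      Fin.circularNorm_le_val (T - (j - i))
  have hvu : (strongProd ⊤ (cycleGraph (2 * t + 1))).dist (a, j) (a, i) ≤ (j - i).val := by
    simpa [strongProd_top_cycleGraph_dist] using Fin.circularNorm_le_val (j - i)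
  have := connected_strongProd_top_cycleGraph.dist_triangle
    (u := (a, i + T)) (v := (a, j)) (w := (a, i))
  left
  omega

theorem isStrongMetricGenerator_strongProd_top_oddCycle [Fintype α] [DecidableEq α] (a : α) :
    IsStrongMetricGenerator (strongProd ⊤ (cycleGraph (2 * t + 1)))
      ({a} ×ˢ Iio ⟨t, by omega⟩)ᶜ := by
  set T : Fin (2 * t + 1) := ⟨t, by omega⟩
  have resolver : ∀ i j : Fin (2 * t + 1), i < j → j.val < t →
      ∃ w ∈ ({a} ×ˢ Iio T)ᶜ,
        StronglyResolves (strongProd ⊤ (cycleGraph (2 * t + 1))) w (a, i) (a, j) := by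
    intro i j hij hj
    refine ⟨(a, i + T), ?_, strongProd_top_oddCycle_stronglyResolves a hij hj⟩
    have : (i + T).val = i.val + t := by
      rw [Fin.val_add, Nat.mod_eq_of_lt (by simp only [T]; omega)]
    simp [Fin.lt_def, this, T]
  apply isStrongMetricGenerator_of_forall_notMem
  rintro ⟨b, i⟩ hu ⟨c, j⟩ hv huv
  simp only [mem_compl, not_not, mem_product, mem_singleton, mem_Iio] at hu hv
  obtain ⟨rfl, hi : i.val < t⟩ := hu
  obtain ⟨rfl, hj : j.val < t⟩ := hv
  rcases lt_or_gt_of_ne (fun h : i = j => huv (h ▸ rfl)) with hij | hji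
  · exact resolver i j hij hj
  · obtain ⟨w, hw, hres⟩ := resolver j i hji hi
    exact ⟨w, hw, hres.symm⟩

theorem sdim_strongProd_top_oddCycle [Fintype α] (ht : 1 ≤ t) :
    sdim (strongProd (⊤ : SimpleGraph α) (cycleGraph (2 * t + 1))) =
      Fintype.card α * (2 * t + 1) - t := by
  classical
  obtain ⟨a⟩ := ‹Nonempty α›
  have hcard : ({a} ×ˢ Iio (⟨t, by omega⟩ : Fin (2 * t + 1))).card = t := by
    simp [Fin.card_Iio]
  refine (sdim_eq_card (isStrongMetricGenerator_strongProd_top_oddCycle a) fun s hs => ?_).trans ?_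
  · have := strongProd_top_oddCycle_card_le_of_isIndepFinset ht
      (hs.isIndepFinset_compl connected_strongProd_top_cycleGraph)
    rw [card_compl] at this ⊢
    have := card_le_univ s
    omega
  · rw [card_compl, hcard, Fintype.card_prod, Fintype.card_fin]

end CompleteStrongProdOddCycle

end SimpleGraph

theorem sdim_strongProd_triangle_oddCycle (t : ℕ) (ht : 1 ≤ t) :
    sdim (strongProd (cycleGraph 3) (cycleGraph (2 * t + 1))) = 5 * t + 3 := by
  rw [cycleGraph_three_eq_top, sdim_strongProd_top_oddCycle ht, Fintype.card_fin]
  omega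
end
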